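/- Let R be a commutative ring, m ∈ R, n ≥ 1, and let a^{(e)}_{i,j} denote the (i,j) entry of T_n(m)^e. Then for every e ≥ 1 and every 1 ≤ i ≤ n: a^{(e)}_{i,1} = U_{e-1}^{n-i}·U_e^{i-1} (natural-number powers, with x^0 = 1). -/

import Mathlib

/-- The generalized Fibonacci sequence with parameter `m`:
`U_0 = 0`, `U_1 = 1`, `U_{e+1} = m U_e + U_{e-1}`. -/
def genFibU {R : Type*} [CommRing R] (m : R) : ℕ → R
  | 0 => 0
  | 1 => 1
  | e + 2 => m * genFibU m (e + 1) + genFibU m e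

/-- The `n × n` generalized Fibonacci matrix `T_n(m)`, with 1-based `(i,j)` entry
`m^{i+j-n-1} C(i-1, n-j)` when `i + j ≥ n + 1` and `0` otherwise. -/
def genFibMatrix {R : Type*} [CommRing R] (m : R) (n : ℕ) :
    Matrix (Fin n) (Fin n) R :=
  Matrix.of fun i j =>
    if n ≤ i.val + j.val + 1 then
      m ^ (i.val + j.val + 1 - n) * (Nat.choose i.val (n - 1 - j.val) : R)
    else 0

lemma genFib_aux {R : Type*} [CommRing R] (m : R) (n : ℕ) (hn : 1 ≤ n) :
    ∀ e : ℕ, ∀ i : Fin n,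
      ((genFibMatrix m n) ^ (e + 1)) i ⟨0, Nat.lt_of_lt_of_le Nat.zero_lt_one hn⟩ =
        genFibU m e ^ (n - 1 - i.val) * genFibU m (e + 1) ^ i.val := by
  intro e
  induction e with
  | zero =>
    intro i
    have hi : i.val ≤ n - 1 := by omega
    rw [pow_one]
    simp only [genFibMatrix, Matrix.of_apply]
    rcases Nat.lt_or_ge i.val (n - 1) with h | h
    · rw [if_neg (by omega)]
      show (0 : R) = genFibU m 0 ^ (n - 1 - i.val) * genFibU m 1 ^ i.val
      rw [show genFibU m 0 = 0 from rfl, zero_pow (by omega), zero_mul]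
    · have hieq : i.val = n - 1 := by omega
      rw [if_pos (by omega)]
      show _ = genFibU m 0 ^ (n - 1 - i.val) * genFibU m 1 ^ i.val
      rw [show genFibU m 1 = (1 : R) from rfl, hieq]
      simp [show n - 1 + 0 + 1 - n = 0 by omega]
  | succ e ih =>
    intro i
    have hi : i.val ≤ n - 1 := by omega
    rw [pow_succ', Matrix.mul_apply]
    simp only [ih]
    simp only [genFibMatrix, Matrix.of_apply]
    rw [Fin.sum_univ_eq_sum_range (fun j =>
      (if n ≤ i.val + j + 1 then
        m ^ (i.val + j + 1 - n) * ((Nat.choose i.val (n - 1 - j)) : R) else 0) *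
      (genFibU m e ^ (n - 1 - j) * genFibU m (e + 1) ^ j))]
    simp only [ite_mul, zero_mul]
    rw [← Finset.sum_filter]
    have hfil : (Finset.range n).filter (fun j => n ≤ i.val + j + 1) =
        Finset.Ico (n - 1 - i.val) n := by
      ext j
      simp [Finset.mem_filter, Finset.mem_Ico]
      omega
    rw [hfil, Finset.sum_Ico_eq_sum_range, show n - (n - 1 - i.val) = i.val + 1 by omega]
    have hrhs : genFibU m (e + 1 + 1) = m * genFibU m (e + 1) + genFibU m e := rfl
    rw [hrhs, add_pow, Finset.mul_sum]
    refine Finset.sum_congr rfl fun k hk => ?_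
    have hk' : k ≤ i.val := by simpa [Nat.lt_succ_iff] using hk
    have h1 : i.val + (n - 1 - i.val + k) + 1 - n = k := by omega
    have h2 : n - 1 - (n - 1 - i.val + k) = i.val - k := by omega
    have h3 : n - 1 - i.val + k = (n - 1 - i.val) + k := rfl
    rw [h1, h2, h3, pow_add, mul_pow, Nat.choose_symm hk']
    ring

/-- First column of `T_n(m)^e` (1-based row index `i = i.val + 1`):
`a^{(e)}_{i,1} = U_{e-1}^{n-i} U_e^{i-1}`. -/
theorem genFibMatrix_pow_first_col {R : Type*} [CommRing R] (m : R) (n : ℕ) (hn : 1 ≤ n) :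
    ∀ e : ℕ, 1 ≤ e → ∀ i : Fin n,
      ((genFibMatrix m n) ^ e) i ⟨0, by omega⟩ =
        genFibU m (e - 1) ^ (n - 1 - i.val) * genFibU m e ^ i.val := by
  intro e he i
  obtain ⟨e', rfl⟩ : ∃ e', e = e' + 1 := ⟨e - 1, by omega⟩
  simpa using genFib_aux m n hn e' i
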